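/- Let G be a tight graph whose complement is disconnected, with co-components G1,...,Gr; let Ti be the set of dense vertices of G lying in Gi and pi the common degree within Gi of the vertices of Ti. Then |Ti| ≥ pi + 1 for every i; and if |Ti| > pi + 1 for some i, then G admits no tight b-colouring. -/

import Mathlib

open SimpleGraph

/-- A proper colouring of `G` given as a function to `ℕ`. -/
def IsProperColoring {V : Type*} (G : SimpleGraph V) (c : V → ℕ) : Prop :=
  ∀ u v, G.Adj u v → c u ≠ c v

/-- A vertex `v` is b-chromatic under `c`: it has a neighbour of every used colour
other than its own. -/
def IsBVertex {V : Type*} (G : SimpleGraph V) (c : V → ℕ) (v : V) : Prop :=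
  ∀ j ∈ Set.range c, j ≠ c v → ∃ u, G.Adj v u ∧ c u = j

/-- A b-colouring: a proper colouring in which every colour class contains a
b-chromatic vertex. -/
def IsBColoring {V : Type*} (G : SimpleGraph V) (c : V → ℕ) : Prop :=
  IsProperColoring G c ∧ ∀ j ∈ Set.range c, ∃ v, c v = j ∧ IsBVertex G c v

/-- The number of colours used by a colouring. -/
noncomputable def numColors {V : Type*} (c : V → ℕ) : ℕ := (Set.range c).ncard

/-- The b-chromatic number: the maximum number of colours in a b-colouring. -/
noncomputable def bChromaticNumber {V : Type*} (G : SimpleGraph V) : ℕ :=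
  sSup {k | ∃ c, IsBColoring G c ∧ numColors c = k}

/-- The m-degree `m(G)`: the largest `k` such that `G` has at least `k` vertices of
degree at least `k - 1`. -/
noncomputable def mDegree {V : Type*} (G : SimpleGraph V) : ℕ :=
  sSup {k | k ≤ {v : V | k ≤ (G.neighborSet v).ncard + 1}.ncard}

/-- The set of dense vertices: those of degree at least `m(G) - 1`. -/
def denseSet {V : Type*} (G : SimpleGraph V) : Set V :=
  {v | mDegree G ≤ (G.neighborSet v).ncard + 1}

/-- A graph is tight if it has exactly `m(G)` dense vertices, each of degree
exactly `m(G) - 1`. -/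
def IsTight {V : Type*} (G : SimpleGraph V) : Prop :=
  (denseSet G).ncard = mDegree G ∧
    ∀ v ∈ denseSet G, (G.neighborSet v).ncard = mDegree G - 1

/-- A fall colouring: a proper colouring in which every vertex has a neighbour of
every used colour other than its own. -/
def IsFallColoring {V : Type*} (G : SimpleGraph V) (c : V → ℕ) : Prop :=
  IsProperColoring G c ∧ ∀ v, ∀ j ∈ Set.range c, j ≠ c v → ∃ u, G.Adj v u ∧ c u = j

/-- The fall spectrum: the set of numbers of colours of fall colourings of `G`. -/
def fallSpectrum {V : Type*} (G : SimpleGraph V) : Set ℕ :=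
  {k | ∃ c, IsFallColoring G c ∧ numColors c = k}

/-- The outer boundary of a vertex set: vertices outside it with a neighbour in it. -/
def outerBoundary {V : Type*} (G : SimpleGraph V) (T : Set V) : Set V :=
  {s | s ∉ T ∧ ∃ t ∈ T, G.Adj s t}

/-!
Vertices in different co-components are adjacent, so a vertex `v` of a co-component `K` has
degree `|N(v) ∩ K| + |V \ K|`. For a dense `v ∈ K` this degree is `m - 1`, while at most
`|V \ K|` of the `m` dense vertices lie outside `K`; hence `|T_K| ≥ p_K + 1`.

In a b-colouring with `m` colours every b-vertex has degree at least `m - 1`, so the `m`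
b-vertices chosen one per colour are exactly the `m` dense vertices: all dense vertices are
b-vertices and have distinct colours. A b-vertex `v` must see the colour of each `u ∈ K`
inside `K`, since a neighbour of `v` outside `K` is adjacent to `u`. So the `|T_K|` distinct
colours of `T_K` all occur on `{v} ∪ (N(v) ∩ K)`, giving `|T_K| ≤ p_K + 1`.
-/

variable {V : Type*} {G : SimpleGraph V}

namespace SimpleGraph

theorem adj_of_mem_supp_of_notMem_supp {K : Gᶜ.ConnectedComponent} {u w : V}
    (hu : u ∈ K.supp) (hw : w ∉ K.supp) : G.Adj u w := by
  by_contra h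
  have hne : u ≠ w := fun huw => hw (huw ▸ hu)
  exact hw ((K.mem_supp_congr_adj ((compl_adj G u w).mpr ⟨hne, h⟩)).mp hu)

theorem ncard_neighborSet_eq_of_mem_supp [Finite V] {K : Gᶜ.ConnectedComponent} {u : V}
    (hu : u ∈ K.supp) :
    (G.neighborSet u).ncard = (G.neighborSet u ∩ K.supp).ncard + K.suppᶜ.ncard := by
  have hout : G.neighborSet u \ K.supp = K.suppᶜ :=
    Set.Subset.antisymm (fun _ hw => hw.2)
      fun _ hw => ⟨adj_of_mem_supp_of_notMem_supp hu hw, hw⟩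
  rw [← hout, Set.ncard_inter_add_ncard_sdiff_eq_ncard]

end SimpleGraph

theorem IsBVertex.mem_insert_image_neighborSet_inter_supp {c : V → ℕ} {v u : V}
    (hc : IsProperColoring G c) (hv : IsBVertex G c v) {K : Gᶜ.ConnectedComponent}
    (hu : u ∈ K.supp) : c u ∈ insert (c v) (c '' (G.neighborSet v ∩ K.supp)) := by
  by_cases h : c u = c v
  · exact Or.inl h
  obtain ⟨w, hvw, hw⟩ := hv _ ⟨u, rfl⟩ h
  by_cases hwK : w ∈ K.supp
  · exact Or.inr ⟨w, ⟨hvw, hwK⟩, hw⟩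
  · exact (hc u w (adj_of_mem_supp_of_notMem_supp hu hwK) hw.symm).elim

section Tight

variable [Finite V]

theorem IsTight.denseSet_inter_supp_nonempty (ht : IsTight G) (K : Gᶜ.ConnectedComponent) :
    (denseSet G ∩ K.supp).Nonempty := by
  by_contra hempty
  obtain ⟨v, hv⟩ := K.nonempty_supp
  have hout : denseSet G ⊆ K.suppᶜ := fun u hu huK => hempty ⟨u, hu, huK⟩
  have hdense : v ∈ denseSet G := by
    show mDegree G ≤ (G.neighborSet v).ncard + 1
    have hm := ht.1 ▸ Set.ncard_le_ncard hout
    have hdeg := ncard_neighborSet_eq_of_mem_supp (G := G) hv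
    omega
  exact hempty ⟨v, hdense, hv⟩

theorem IsTight.ncard_neighborSet_inter_supp_add_one_le (ht : IsTight G)
    {K : Gᶜ.ConnectedComponent} {v : V} (hv : v ∈ denseSet G ∩ K.supp) :
    (G.neighborSet v ∩ K.supp).ncard + 1 ≤ (denseSet G ∩ K.supp).ncard := by
  have hdeg := ht.2 v hv.1
  have hm : 0 < mDegree G := ht.1 ▸ (Set.ncard_pos).mpr ⟨v, hv.1⟩
  have hsplit := Set.ncard_inter_add_ncard_sdiff_eq_ncard (denseSet G) K.supp
  have hout : (denseSet G \ K.supp).ncard ≤ K.suppᶜ.ncard :=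
    Set.ncard_le_ncard fun _ hu => hu.2
  have hnbr := ncard_neighborSet_eq_of_mem_supp (G := G) hv.2
  have hcard := ht.1
  omega

theorem IsBVertex.numColors_le {c : V → ℕ} {v : V} (hv : IsBVertex G c v) :
    numColors c ≤ (G.neighborSet v).ncard + 1 := by
  have hsub : Set.range c ⊆ insert (c v) (c '' G.neighborSet v) := by
    rintro _ ⟨u, rfl⟩
    by_cases h : c u = c v
    · exact Or.inl h
    · obtain ⟨w, hvw, hw⟩ := hv _ ⟨u, rfl⟩ h
      exact Or.inr ⟨w, hvw, hw⟩
  calc numColors c ≤ (insert (c v) (c '' G.neighborSet v)).ncard := Set.ncard_le_ncard hsub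
    _ ≤ (c '' G.neighborSet v).ncard + 1 := Set.ncard_insert_le _ _
    _ ≤ (G.neighborSet v).ncard + 1 := by gcongr; exact Set.ncard_image_le

theorem IsTight.denseSet_eq_setOf_isBVertex (ht : IsTight G) {c : V → ℕ}
    (hc : IsBColoring G c) (hnum : numColors c = mDegree G) :
    denseSet G = {v | IsBVertex G c v} ∧ Set.InjOn c (denseSet G) := by
  have hBD : {v | IsBVertex G c v} ⊆ denseSet G := fun v hv =>
    show mDegree G ≤ _ from hnum ▸ IsBVertex.numColors_le hv
  have hR : Set.range c ⊆ c '' {v | IsBVertex G c v} := by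
    rintro _ ⟨u, rfl⟩
    obtain ⟨v, hv, hbv⟩ := hc.2 _ ⟨u, rfl⟩
    exact ⟨v, hbv, hv⟩
  have hcount : (denseSet G).ncard ≤ (c '' {v | IsBVertex G c v}).ncard :=
    ht.1 ▸ hnum ▸ Set.ncard_le_ncard hR
  have himage : (c '' {v | IsBVertex G c v}).ncard ≤ {v | IsBVertex G c v}.ncard :=
    Set.ncard_image_le
  have hDB : denseSet G = {v | IsBVertex G c v} :=
    (Set.eq_of_subset_of_ncard_le hBD (by omega)).symm
  refine ⟨hDB, Set.injOn_of_ncard_image_eq ?_⟩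
  rw [hDB] at hcount ⊢
  omega

theorem IsTight.ncard_denseSet_inter_supp_le (ht : IsTight G) {c : V → ℕ}
    (hc : IsBColoring G c) (hnum : numColors c = mDegree G) {v : V} (hv : v ∈ denseSet G)
    (K : Gᶜ.ConnectedComponent) :
    (denseSet G ∩ K.supp).ncard ≤ (G.neighborSet v ∩ K.supp).ncard + 1 := by
  obtain ⟨hDB, hinj⟩ := ht.denseSet_eq_setOf_isBVertex hc hnum
  have hbv : IsBVertex G c v := (hDB ▸ hv :)
  have hsub : c '' (denseSet G ∩ K.supp) ⊆ insert (c v) (c '' (G.neighborSet v ∩ K.supp)) := by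
    rintro _ ⟨u, hu, rfl⟩
    exact hbv.mem_insert_image_neighborSet_inter_supp hc.1 hu.2
  calc (denseSet G ∩ K.supp).ncard = (c '' (denseSet G ∩ K.supp)).ncard :=
        ((hinj.mono Set.inter_subset_left).ncard_image).symm
    _ ≤ (insert (c v) (c '' (G.neighborSet v ∩ K.supp))).ncard := Set.ncard_le_ncard hsub
    _ ≤ (c '' (G.neighborSet v ∩ K.supp)).ncard + 1 := Set.ncard_insert_le _ _
    _ ≤ (G.neighborSet v ∩ K.supp).ncard + 1 := by gcongr; exact Set.ncard_image_le

end Tight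

theorem stmt19_general {V : Type} [Fintype V] (G : SimpleGraph V) (ht : IsTight G)
    (p : (Gᶜ).ConnectedComponent → ℕ)
    (hp : ∀ K : (Gᶜ).ConnectedComponent, ∀ v ∈ denseSet G ∩ K.supp,
      ((G.neighborSet v) ∩ K.supp).ncard = p K) :
    (∀ K : (Gᶜ).ConnectedComponent, p K + 1 ≤ (denseSet G ∩ K.supp).ncard) ∧
    ((∃ K : (Gᶜ).ConnectedComponent, p K + 1 < (denseSet G ∩ K.supp).ncard) →
      ¬ ∃ c : V → ℕ, IsBColoring G c ∧ numColors c = mDegree G) := by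
  refine ⟨fun K => ?_, ?_⟩
  · obtain ⟨v, hv⟩ := ht.denseSet_inter_supp_nonempty K
    exact hp K v hv ▸ ht.ncard_neighborSet_inter_supp_add_one_le hv
  · rintro ⟨K, hK⟩ ⟨c, hc, hnum⟩
    obtain ⟨v, hv⟩ := ht.denseSet_inter_supp_nonempty K
    have hle := ht.ncard_denseSet_inter_supp_le hc hnum hv.1 K
    rw [hp K v hv] at hle
    omega

theorem stmt19 {V : Type} [Fintype V] (G : SimpleGraph V) (ht : IsTight G)
    (hdisc : ¬ (Gᶜ).Connected)
    (p : (Gᶜ).ConnectedComponent → ℕ)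
    (hp : ∀ K : (Gᶜ).ConnectedComponent, ∀ v ∈ denseSet G ∩ K.supp,
      ((G.neighborSet v) ∩ K.supp).ncard = p K) :
    (∀ K : (Gᶜ).ConnectedComponent, p K + 1 ≤ (denseSet G ∩ K.supp).ncard) ∧
    ((∃ K : (Gᶜ).ConnectedComponent, p K + 1 < (denseSet G ∩ K.supp).ncard) →
      ¬ ∃ c : V → ℕ, IsBColoring G c ∧ numColors c = mDegree G) :=
  stmt19_general G ht p hp
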